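/- Let d ≥ 1, H ∈ (1/2,1), T > 0 and r > d/2 − 1 + 1/(2H). Then ∫_{ℝ^d} (1+|x|²)^{−r} ( ∫_0^T ∫_0^T |u−v|^{2H−2} e^{−x_1²|u−v|^{2H}/2} du dv ) dx < ∞, where x = (x_1,…,x_d) ∈ ℝ^d and |x| is the Euclidean norm. (This is the finiteness of the term C_k in the proof that the d-dimensional fractional Brownian current belongs to H^{−r}(ℝ^d;ℝ^d) for N = 1.) -/

import Mathlib

/-!
Choose `α` with `1/(2H) - 1/2 < α < 1/2` and `r - α > (d-1)/2`, and split the weight as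
`(1 + |x|²)^(-r) ≤ (1 + x₁²)^(-α) (1 + |x'|²)^(-(r-α))`, where `x = (x₁, x')`. The `x'`-integral is
a convergent Japanese-bracket integral. Bounding `(1 + x₁²)^(-α) ≤ |x₁|^(-2α)`, the Gamma integral
gives `∫ (1 + x₁²)^(-α) e^(-x₁² s^(2H)/2) dx₁ ≤ C s^(H(2α-1))`, so for `s = |u - v|` the space
integral is at most `C' s^(H(2α+1)-2)`, and the remaining time integral over `[0,T]²` is finite
because `H(2α+1) - 2 > -1` exactly when `α > 1/(2H) - 1/2`.
-/

open MeasureTheory Real Set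

open scoped ENNReal

theorem lintegral_comp_abs (f : ℝ → ℝ≥0∞) : ∫⁻ x, f |x| = 2 * ∫⁻ x in Ioi 0, f x := by
  have hpos : ∫⁻ x in Ioi 0, f |x| = ∫⁻ x in Ioi 0, f x :=
    setLIntegral_congr_fun measurableSet_Ioi fun x hx => by rw [abs_of_pos hx]
  have hneg : ∫⁻ x in Iic 0, f |x| = ∫⁻ x in Ioi 0, f x := by
    rw [← (Measure.measurePreserving_neg volume).setLIntegral_comp_preimage_emb
      (Homeomorph.neg ℝ).measurableEmbedding, neg_preimage, neg_Iic, neg_zero,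
      setLIntegral_congr Ioi_ae_eq_Ici.symm]
    simpa only [abs_neg] using hpos
  rw [← lintegral_add_compl _ measurableSet_Iic, compl_Iic, hneg, hpos, two_mul]

theorem lintegral_one_add_sq_rpow_neg_mul_exp_neg_mul_sq_le {α b : ℝ} (hα₀ : 0 ≤ α)
    (hα : α < 1 / 2) (hb : 0 < b) :
    ∫⁻ x, ENNReal.ofReal ((1 + x ^ 2) ^ (-α) * exp (-b * x ^ 2))
      ≤ ENNReal.ofReal (b ^ (α - 1 / 2) * Gamma (1 / 2 - α)) := by
  have hp : -1 < -2 * α := by linarith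
  have hnonneg : 0 ≤ᵐ[volume.restrict (Ioi 0)] fun t : ℝ => t ^ (-2 * α) * exp (-b * t ^ 2) :=
    ae_restrict_of_forall_mem measurableSet_Ioi fun t ht => by
      have := rpow_nonneg (le_of_lt ht) (-2 * α); positivity
  calc ∫⁻ x, ENNReal.ofReal ((1 + x ^ 2) ^ (-α) * exp (-b * x ^ 2))
      = 2 * ∫⁻ t in Ioi 0, ENNReal.ofReal ((1 + t ^ 2) ^ (-α) * exp (-b * t ^ 2)) := by
        have h := lintegral_comp_abs fun t => ENNReal.ofReal ((1 + t ^ 2) ^ (-α) * exp (-b * t ^ 2))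
        simpa only [sq_abs] using h
    _ ≤ 2 * ∫⁻ t in Ioi 0, ENNReal.ofReal (t ^ (-2 * α) * exp (-b * t ^ 2)) := by
        gcongr 2 * ?_
        refine setLIntegral_mono' measurableSet_Ioi fun t ht => ?_
        gcongr
        rw [show -2 * α = 2 * -α by ring, rpow_mul (le_of_lt ht), rpow_two]
        exact rpow_le_rpow_of_nonpos (pow_pos ht 2) (by linarith) (by linarith)
    _ = ENNReal.ofReal (2 * ∫ t in Ioi 0, t ^ (-2 * α) * exp (-b * t ^ 2)) := by
        rw [← ofReal_integral_eq_lintegral_ofReal (integrableOn_rpow_mul_exp_neg_mul_sq hb hp)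
          hnonneg, ENNReal.ofReal_mul zero_le_two, ENNReal.ofReal_ofNat]
    _ = ENNReal.ofReal (b ^ (α - 1 / 2) * Gamma (1 / 2 - α)) := by
        simp_rw [← rpow_two, integral_rpow_mul_exp_neg_mul_rpow two_pos hp hb]
        congr 1
        ring_nf

theorem one_add_add_rpow_neg_le_mul {a c α β : ℝ} (ha : 0 ≤ a) (hc : 0 ≤ c) (hα : 0 ≤ α)
    (hβ : 0 ≤ β) : (1 + (a + c)) ^ (-(α + β)) ≤ (1 + a) ^ (-α) * (1 + c) ^ (-β) := by
  rw [neg_add, rpow_add (by positivity)]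
  exact mul_le_mul (rpow_le_rpow_of_nonpos (by positivity) (by linarith) (by linarith))
    (rpow_le_rpow_of_nonpos (by positivity) (by linarith) (by linarith)) (by positivity)
    (by positivity)

theorem lintegral_one_add_norm_sq_rpow_neg_lt_top {E : Type*} [NormedAddCommGroup E]
    [NormedSpace ℝ E] [FiniteDimensional ℝ E] [MeasurableSpace E] [BorelSpace E]
    {μ : Measure E} [μ.IsAddHaarMeasure] {β : ℝ} (hβ : (Module.finrank ℝ E : ℝ) < 2 * β) :
    ∫⁻ x, ENNReal.ofReal ((1 + ‖x‖ ^ 2) ^ (-β)) ∂μ < ⊤ := by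
  simpa [neg_div] using (integrable_rpow_neg_one_add_norm_sq (μ := μ) hβ).lintegral_lt_top

namespace EuclideanSpace

variable {n : ℕ}

def tail (x : EuclideanSpace ℝ (Fin (n + 1))) : EuclideanSpace ℝ (Fin n) :=
  WithLp.toLp 2 fun j => x j.succ

theorem norm_sq_eq_sq_add_norm_tail_sq (x : EuclideanSpace ℝ (Fin (n + 1))) :
    ‖x‖ ^ 2 = x 0 ^ 2 + ‖x.tail‖ ^ 2 := by
  simp [tail, EuclideanSpace.norm_sq_eq, Fin.sum_univ_succ]

theorem lintegral_mul_tail {f : ℝ → ℝ≥0∞} {g : EuclideanSpace ℝ (Fin n) → ℝ≥0∞}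
    (hf : Measurable f) (hg : Measurable g) :
    ∫⁻ x : EuclideanSpace ℝ (Fin (n + 1)), f (x 0) * g x.tail = (∫⁻ a, f a) * ∫⁻ z, g z := by
  rw [← (PiLp.volume_preserving_toLp (Fin (n + 1))).lintegral_comp_emb
      (MeasurableEquiv.toLp 2 _).measurableEmbedding,
    ← (PiLp.volume_preserving_toLp (Fin n)).lintegral_comp_emb
      (MeasurableEquiv.toLp 2 _).measurableEmbedding,
    ← lintegral_prod_mul (g := fun z : Fin n → ℝ => g (WithLp.toLp 2 z)) hf.aemeasurable
      (hg.comp (MeasurableEquiv.toLp 2 _).measurable).aemeasurable,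
    ← Measure.volume_eq_prod,
    ← (volume_preserving_piFinSuccAbove (fun _ : Fin (n + 1) => ℝ) 0).lintegral_comp_emb
      (MeasurableEquiv.measurableEmbedding _)]
  rfl

end EuclideanSpace

theorem lintegral_one_add_norm_sq_rpow_neg_mul_exp_neg_mul_sq_zero_le {n : ℕ} {α r b : ℝ}
    (hα₀ : 0 ≤ α) (hα : α < 1 / 2) (hαr : α ≤ r) (hb : 0 < b) :
    ∫⁻ x : EuclideanSpace ℝ (Fin (n + 1)),
        ENNReal.ofReal ((1 + ‖x‖ ^ 2) ^ (-r) * exp (-b * x 0 ^ 2))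
      ≤ (∫⁻ z : EuclideanSpace ℝ (Fin n), ENNReal.ofReal ((1 + ‖z‖ ^ 2) ^ (-(r - α))))
        * ENNReal.ofReal (b ^ (α - 1 / 2) * Gamma (1 / 2 - α)) := by
  calc ∫⁻ x : EuclideanSpace ℝ (Fin (n + 1)),
        ENNReal.ofReal ((1 + ‖x‖ ^ 2) ^ (-r) * exp (-b * x 0 ^ 2))
      ≤ ∫⁻ x : EuclideanSpace ℝ (Fin (n + 1)),
        ENNReal.ofReal ((1 + x 0 ^ 2) ^ (-α) * exp (-b * x 0 ^ 2))
          * ENNReal.ofReal ((1 + ‖x.tail‖ ^ 2) ^ (-(r - α))) := by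
        refine lintegral_mono fun x => ?_
        rw [← ENNReal.ofReal_mul (by positivity), x.norm_sq_eq_sq_add_norm_tail_sq]
        refine ENNReal.ofReal_le_ofReal ?_
        have hsplit := one_add_add_rpow_neg_le_mul (sq_nonneg (x 0)) (sq_nonneg ‖x.tail‖) hα₀
          (sub_nonneg.2 hαr)
        rw [add_sub_cancel] at hsplit
        calc _ ≤ _ := mul_le_mul_of_nonneg_right hsplit (exp_pos _).le
          _ = _ := by ring
    _ = (∫⁻ a, ENNReal.ofReal ((1 + a ^ 2) ^ (-α) * exp (-b * a ^ 2)))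
          * ∫⁻ z : EuclideanSpace ℝ (Fin n), ENNReal.ofReal ((1 + ‖z‖ ^ 2) ^ (-(r - α))) :=
        EuclideanSpace.lintegral_mul_tail
          (f := fun a => ENNReal.ofReal ((1 + a ^ 2) ^ (-α) * exp (-b * a ^ 2)))
          (g := fun z => ENNReal.ofReal ((1 + ‖z‖ ^ 2) ^ (-(r - α)))) (by fun_prop) (by fun_prop)
    _ ≤ _ := by
        rw [mul_comm]
        gcongr
        exact lintegral_one_add_sq_rpow_neg_mul_exp_neg_mul_sq_le hα₀ hα hb

theorem lintegral_one_add_norm_sq_rpow_neg_mul_rpow_mul_exp_le {n : ℕ} {H α r s : ℝ}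
    (hH : H ≠ 1) (hα₀ : 0 ≤ α) (hα : α < 1 / 2) (hαr : α ≤ r) (hs : 0 ≤ s) :
    ∫⁻ x : EuclideanSpace ℝ (Fin (n + 1)),
      ENNReal.ofReal ((1 + ‖x‖ ^ 2) ^ (-r) * s ^ (2 * H - 2) * exp (-(x 0 ^ 2 * s ^ (2 * H)) / 2))
      ≤ (∫⁻ z : EuclideanSpace ℝ (Fin n), ENNReal.ofReal ((1 + ‖z‖ ^ 2) ^ (-(r - α))))
        * ENNReal.ofReal (2 ^ (1 / 2 - α) * Gamma (1 / 2 - α))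
        * ENNReal.ofReal (s ^ (H * (2 * α + 1) - 2)) := by
  rcases hs.eq_or_lt with rfl | hs_pos
  · -- `0 ^ (2H - 2) = 0` because the exponent is nonzero, so the integrand vanishes
    have hH' : 2 * H - 2 ≠ 0 := fun h => hH (by linarith)
    simp [zero_rpow hH']
  set b := s ^ (2 * H) / 2
  have hb : 0 < b := by positivity
  have hΓ : 0 < Gamma (1 / 2 - α) := Gamma_pos_of_pos (by linarith)
  calc ∫⁻ x : EuclideanSpace ℝ (Fin (n + 1)), ENNReal.ofReal
        ((1 + ‖x‖ ^ 2) ^ (-r) * s ^ (2 * H - 2) * exp (-(x 0 ^ 2 * s ^ (2 * H)) / 2))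
      = ENNReal.ofReal (s ^ (2 * H - 2)) * ∫⁻ x : EuclideanSpace ℝ (Fin (n + 1)),
          ENNReal.ofReal ((1 + ‖x‖ ^ 2) ^ (-r) * exp (-b * x 0 ^ 2)) := by
        rw [← lintegral_const_mul' _ _ ENNReal.ofReal_ne_top]
        refine lintegral_congr fun x => ?_
        rw [← ENNReal.ofReal_mul (by positivity)]
        congr 1
        simp only [b]
        ring_nf
    _ ≤ ENNReal.ofReal (s ^ (2 * H - 2)) *
          ((∫⁻ z : EuclideanSpace ℝ (Fin n), ENNReal.ofReal ((1 + ‖z‖ ^ 2) ^ (-(r - α))))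
            * ENNReal.ofReal (b ^ (α - 1 / 2) * Gamma (1 / 2 - α))) := by
        gcongr
        exact lintegral_one_add_norm_sq_rpow_neg_mul_exp_neg_mul_sq_zero_le hα₀ hα hαr hb
    _ = _ := by
        rw [mul_left_comm, mul_assoc, ← ENNReal.ofReal_mul (by positivity),
          ← ENNReal.ofReal_mul (by positivity)]
        congr 2
        rw [div_rpow (by positivity) zero_le_two, ← rpow_mul hs, div_eq_mul_inv,
          ← rpow_neg zero_le_two, show H * (2 * α + 1) - 2 = (2 * H - 2) + 2 * H * (α - 1 / 2) by
            ring, rpow_add hs_pos]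
        ring_nf

theorem lintegral_lintegral_lintegral_comm {α β γ : Type*} [MeasurableSpace α]
    [MeasurableSpace β] [MeasurableSpace γ] {μ : Measure α} {ν : Measure β} {ρ : Measure γ}
    [SFinite μ] [SFinite ν] [SFinite ρ] {f : α → β → γ → ℝ≥0∞}
    (hf : Measurable fun p : (α × β) × γ => f p.1.1 p.1.2 p.2) :
    ∫⁻ x, ∫⁻ y, ∫⁻ z, f x y z ∂ρ ∂ν ∂μ = ∫⁻ y, ∫⁻ z, ∫⁻ x, f x y z ∂μ ∂ρ ∂ν := by
  rw [lintegral_lintegral_swap hf.lintegral_prod_right'.aemeasurable]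
  refine lintegral_congr fun y => lintegral_lintegral_swap ?_
  exact (hf.comp ((measurable_fst.prodMk measurable_const).prodMk measurable_snd)).aemeasurable

theorem setLIntegral_Icc_comp_sub_le (g : ℝ → ℝ≥0∞) {T u : ℝ} (hu : u ∈ Icc 0 T) :
    ∫⁻ v in Icc 0 T, g (u - v) ≤ ∫⁻ w in Icc (-T) T, g w :=
  calc ∫⁻ v in Icc 0 T, g (u - v) = ∫⁻ v, (Icc 0 T).indicator (fun v => g (u - v)) v :=
        (lintegral_indicator measurableSet_Icc _).symm
    _ ≤ ∫⁻ v, (Icc (-T) T).indicator g (u - v) := by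
        refine lintegral_mono (indicator_le fun v hv => ?_)
        rw [indicator_of_mem (show u - v ∈ Icc (-T) T from
          ⟨by linarith [hv.2, hu.1], by linarith [hv.1, hu.2]⟩)]
    _ = ∫⁻ w in Icc (-T) T, g w := by
        rw [lintegral_sub_left_eq_self, lintegral_indicator measurableSet_Icc]

theorem lintegral_Icc_lintegral_Icc_abs_sub_rpow_lt_top {e : ℝ} (he : -1 < e) (T : ℝ) :
    ∫⁻ u in Icc 0 T, ∫⁻ v in Icc 0 T, ENNReal.ofReal (|u - v| ^ e) < ⊤ := by
  have hloc : LocallyIntegrable fun w : ℝ => |w| ^ e :=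
    locallyIntegrable_of_norm_le_rpow (C := 1) (α := -e) (by simp) (by simp; linarith)
      (Filter.Eventually.of_forall fun w => by simp [abs_of_nonneg (rpow_nonneg (abs_nonneg w) e)])
      (continuous_abs.measurable.pow_const e).aestronglyMeasurable
  have hK : ∫⁻ w in Icc (-T) T, ENNReal.ofReal (|w| ^ e) < ⊤ :=
    (hloc.integrableOn_isCompact isCompact_Icc).lintegral_lt_top
  calc ∫⁻ u in Icc 0 T, ∫⁻ v in Icc 0 T, ENNReal.ofReal (|u - v| ^ e)
      ≤ ∫⁻ _ in Icc 0 T, ∫⁻ w in Icc (-T) T, ENNReal.ofReal (|w| ^ e) :=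
        setLIntegral_mono' measurableSet_Icc fun _ hu => setLIntegral_Icc_comp_sub_le _ hu
    _ < ⊤ := by
        rw [setLIntegral_const, Real.volume_Icc]
        exact ENNReal.mul_lt_top hK ENNReal.ofReal_lt_top

theorem exists_exponent_split {n : ℕ} {H r : ℝ} (hH : 1 / 2 < H) (hH1 : H < 1)
    (hr : ((n : ℝ) + 1) / 2 - 1 + 1 / (2 * H) < r) :
    ∃ α, 0 ≤ α ∧ α < 1 / 2 ∧ α ≤ r ∧ (n : ℝ) < 2 * (r - α) ∧ -1 < H * (2 * α + 1) - 2 := by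
  have h2H : 0 < 2 * H := by linarith
  have hinv_lo : 1 / 2 < 1 / (2 * H) := by rw [div_lt_div_iff₀ two_pos h2H]; linarith
  have hinv_hi : 1 / (2 * H) < 1 := by rw [div_lt_one h2H]; linarith
  obtain ⟨α, hα_lo, hα_hi⟩ : ∃ α, 1 / (2 * H) - 1 / 2 < α ∧ α < min (1 / 2) (r - n / 2) :=
    exists_between (lt_min (by linarith) (by linarith))
  rw [lt_min_iff] at hα_hi
  have hn : (0 : ℝ) ≤ n := n.cast_nonneg
  have hαH : 1 - H < 2 * H * α :=
    calc 1 - H = 2 * H * (1 / (2 * H) - 1 / 2) := by field_simp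
      _ < 2 * H * α := mul_lt_mul_of_pos_left hα_lo h2H
  exact ⟨α, by linarith, hα_hi.1, by linarith, by linarith, by linarith⟩

theorem fbm_multidim_current_term_Ck_finite_general
    (d : ℕ) (hd : 1 ≤ d) (H T r : ℝ) (hH : 1 / 2 < H) (hH1 : H < 1)
    (hr : (d : ℝ) / 2 - 1 + 1 / (2 * H) < r) :
    ∫⁻ x : EuclideanSpace ℝ (Fin d), ∫⁻ u in Set.Icc (0 : ℝ) T, ∫⁻ v in Set.Icc (0 : ℝ) T,
      ENNReal.ofReal ((1 + ‖x‖ ^ 2) ^ (-r) * |u - v| ^ (2 * H - 2) *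
        Real.exp (-((x ⟨0, hd⟩) ^ 2 * |u - v| ^ (2 * H)) / 2))
    < ⊤ := by
  obtain ⟨n, rfl⟩ : ∃ n, d = n + 1 := ⟨d - 1, by omega⟩
  obtain ⟨α, hα₀, hα, hαr, hαn, he⟩ := exists_exponent_split hH hH1 (by exact_mod_cast hr)
  set C := (∫⁻ z : EuclideanSpace ℝ (Fin n), ENNReal.ofReal ((1 + ‖z‖ ^ 2) ^ (-(r - α))))
    * ENNReal.ofReal (2 ^ (1 / 2 - α) * Gamma (1 / 2 - α))
  have hC : C < ⊤ := ENNReal.mul_lt_top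
    (lintegral_one_add_norm_sq_rpow_neg_lt_top (by simpa using hαn)) ENNReal.ofReal_lt_top
  refine (lintegral_lintegral_lintegral_comm (by fun_prop)).trans_lt ?_
  calc _ ≤ ∫⁻ u in Icc 0 T, ∫⁻ v in Icc 0 T,
        C * ENNReal.ofReal (|u - v| ^ (H * (2 * α + 1) - 2)) := by
        gcongr with u v
        exact lintegral_one_add_norm_sq_rpow_neg_mul_rpow_mul_exp_le hH1.ne hα₀ hα hαr
          (abs_nonneg _)
    _ < ⊤ := by
        simp_rw [lintegral_const_mul' _ _ hC.ne]
        exact ENNReal.mul_lt_top hC (lintegral_Icc_lintegral_Icc_abs_sub_rpow_lt_top he T)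

/-- for `d ≥ 1`, `H ∈ (1/2,1)`, `T > 0` and `r > d/2 − 1 + 1/(2H)`,
`∫_{ℝ^d} (1+|x|²)^{−r} ( ∫_0^T ∫_0^T |u−v|^{2H−2} e^{−x₁²|u−v|^{2H}/2} du dv ) dx < ∞`. -/
theorem fbm_multidim_current_term_Ck_finite
    (d : ℕ) (hd : 1 ≤ d) (H T r : ℝ) (hH : 1 / 2 < H) (hH1 : H < 1) (hT : 0 < T)
    (hr : (d : ℝ) / 2 - 1 + 1 / (2 * H) < r) :
    ∫⁻ x : EuclideanSpace ℝ (Fin d), ∫⁻ u in Set.Icc (0 : ℝ) T, ∫⁻ v in Set.Icc (0 : ℝ) T,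
      ENNReal.ofReal ((1 + ‖x‖ ^ 2) ^ (-r) * |u - v| ^ (2 * H - 2) *
        Real.exp (-((x ⟨0, hd⟩) ^ 2 * |u - v| ^ (2 * H)) / 2))
    < ⊤ :=
  fbm_multidim_current_term_Ck_finite_general d hd H T r hH hH1 hr
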